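/- arXiv:2103.05393 — 2 statements merged into one kernel-verified Lean document; each statement's English description precedes it below -/
import Mathlib

section
/- Let ψ : [0,1]² → ℝ² be the affine map ψ(x,y) = (5π/8, −7π/8) + x·(π/4, π/4) + y·(−π/2, π/2). Then for all x, y ∈ [0,1]: Re φ(ψ(x,0)) < −0.05, Re φ(ψ(x,1)) > 0.05, Im φ(ψ(0,y)) < −0.05, and Im φ(ψ(1,y)) > 0.05. -/
open Real

/-- The function `φ(x,y) = (1/3)(e^{ix} + e^{iy} + e^{i(x+y)})`. -/
noncomputable def phi : ℝ × ℝ → ℂ := fun p =>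
  (1 / 3) * (Complex.exp (Complex.I * p.1) + Complex.exp (Complex.I * p.2) +
    Complex.exp (Complex.I * (p.1 + p.2)))

/-- The affine map `ψ(x,y) = (5π/8, −7π/8) + x·(π/4, π/4) + y·(−π/2, π/2)`. -/
noncomputable def psi : ℝ × ℝ → ℝ × ℝ := fun p =>
  (5 * π / 8 + p.1 * (π / 4) + p.2 * (-(π / 2)),
   -(7 * π / 8) + p.1 * (π / 4) + p.2 * (π / 2))

/-!
Writing `ψ(x,y) = (m + d, m - d)` with `m = xπ/4 - π/8` and `d = 3π/4 - yπ/2`, sum-to-product gives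
`3 Re φ = 2 cos m cos d + cos 2m` and `3 Im φ = 2 sin m cos d + sin 2m`.
On the sides `y = 0, 1` we have `cos d = ∓√2/2` and `cos m ∈ [√2/2, 1]`, so `3 Re φ` is a quadratic
`2c² ∓ √2 c - 1` in `c = cos m`, at most `1 - √2` resp. at least `1`.
On the sides `x = 0, 1` we have `sin 2m = ∓√2/2` and `cos d ≥ -√2/2`, so `±3 Im φ ≥ √2/2 (1 - 2 sin (π/8))`,
which exceeds `0.15` since `sin (π/8) < π/8`.
-/

lemma phi_re (a b : ℝ) : (phi (a, b)).re = (cos a + cos b + cos (a + b)) / 3 := by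
  simp [phi, mul_comm Complex.I, ← Complex.ofReal_add, Complex.exp_ofReal_mul_I_re]
  ring

lemma phi_im (a b : ℝ) : (phi (a, b)).im = (sin a + sin b + sin (a + b)) / 3 := by
  simp [phi, mul_comm Complex.I, ← Complex.ofReal_add, Complex.exp_ofReal_mul_I_im]
  ring

lemma phi_add_sub_re (m d : ℝ) :
    (phi (m + d, m - d)).re = (2 * cos m * cos d + cos (2 * m)) / 3 := by
  rw [phi_re, cos_add, cos_sub, show m + d + (m - d) = 2 * m by ring]
  ring

lemma phi_add_sub_im (m d : ℝ) :
    (phi (m + d, m - d)).im = (2 * sin m * cos d + sin (2 * m)) / 3 := by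
  rw [phi_im, sin_add, sin_sub, show m + d + (m - d) = 2 * m by ring]
  ring

lemma psi_eq_add_sub (x y : ℝ) :
    psi (x, y) = (x * (π / 4) - π / 8 + (3 * π / 4 - y * (π / 2)),
      x * (π / 4) - π / 8 - (3 * π / 4 - y * (π / 2))) := by
  simp only [psi, Prod.mk.injEq]
  constructor <;> ring

lemma sqrt_two_div_two_le_cos {m : ℝ} (hm : |m| ≤ π / 4) : √2 / 2 ≤ cos m := by
  rw [← cos_pi_div_four, ← cos_abs m]
  exact cos_le_cos_of_nonneg_of_le_pi (abs_nonneg m) (by linarith [pi_pos]) hm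

lemma neg_sqrt_two_div_two_le_cos {d : ℝ} (hd₀ : 0 ≤ d) (hd₁ : d ≤ 3 * π / 4) :
    -(√2 / 2) ≤ cos d := by
  have h : cos (3 * π / 4) = -(√2 / 2) := by
    rw [show 3 * π / 4 = π - π / 4 by ring, cos_pi_sub, cos_pi_div_four]
  rw [← h]
  exact cos_le_cos_of_nonneg_of_le_pi hd₀ (by linarith [pi_pos]) hd₁

section Sides

variable {x y : ℝ}

lemma abs_mul_pi_div_four_sub_pi_div_eight_le (hx : x ∈ Set.Icc (0 : ℝ) 1) :
    |x * (π / 4) - π / 8| ≤ π / 4 := by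
  rw [abs_le]
  constructor <;> nlinarith [hx.1, hx.2, pi_pos]

lemma phi_psi_bottom_re_lt (hx : x ∈ Set.Icc (0 : ℝ) 1) : (phi (psi (x, 0))).re < -0.05 := by
  have hd : 3 * π / 4 - 0 * (π / 2) = π - π / 4 := by ring
  rw [psi_eq_add_sub, phi_add_sub_re, hd, cos_pi_sub, cos_pi_div_four, cos_two_mul]
  set c := cos (x * (π / 4) - π / 8)
  have hc₀ : √2 / 2 ≤ c := sqrt_two_div_two_le_cos (abs_mul_pi_div_four_sub_pi_div_eight_le hx)
  have hc₁ : c ≤ 1 := cos_le_one _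
  have hsqrt : (1.15 : ℝ) < √2 := lt_sqrt_of_sq_lt (by norm_num)
  have hsqrt₂ : √2 < 2 := (sqrt_lt' (by norm_num)).2 (by norm_num)
  -- `2c² - √2 c - 1 = (1 - √2) + (c - 1)(2c + 2 - √2)`
  nlinarith [mul_nonneg (sub_nonneg.2 hc₁) (by linarith : (0 : ℝ) ≤ 2 * c + 2 - √2)]

lemma phi_psi_top_re_gt (hx : x ∈ Set.Icc (0 : ℝ) 1) : (phi (psi (x, 1))).re > 0.05 := by
  have hd : 3 * π / 4 - 1 * (π / 2) = π / 4 := by ring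
  rw [psi_eq_add_sub, phi_add_sub_re, hd, cos_pi_div_four, cos_two_mul]
  set c := cos (x * (π / 4) - π / 8)
  have hc₀ : √2 / 2 ≤ c := sqrt_two_div_two_le_cos (abs_mul_pi_div_four_sub_pi_div_eight_le hx)
  have hsq : √2 ^ 2 = 2 := sq_sqrt (by norm_num)
  nlinarith [mul_le_mul hc₀ hc₀ (by positivity) (by linarith [sqrt_nonneg 2]),
    mul_le_mul_of_nonneg_left hc₀ (sqrt_nonneg 2)]

lemma lt_sqrt_two_div_two_add_two_sin_pi_div_eight_mul_cos (hy : y ∈ Set.Icc (0 : ℝ) 1) :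
    (0.15 : ℝ) < √2 / 2 + 2 * sin (π / 8) * cos (3 * π / 4 - y * (π / 2)) := by
  have hcos := neg_sqrt_two_div_two_le_cos (d := 3 * π / 4 - y * (π / 2))
    (by nlinarith [hy.2, pi_pos]) (by nlinarith [hy.1, pi_pos])
  have hsin₀ : 0 ≤ sin (π / 8) :=
    sin_nonneg_of_nonneg_of_le_pi (by positivity) (by linarith [pi_pos])
  have hsin : sin (π / 8) < π / 8 := sin_lt (by positivity)
  have hsqrt : (1.414 : ℝ) < √2 := lt_sqrt_of_sq_lt (by norm_num)
  nlinarith [mul_le_mul_of_nonneg_left hcos hsin₀, pi_lt_d4]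

lemma phi_psi_left_im_lt (hy : y ∈ Set.Icc (0 : ℝ) 1) : (phi (psi (0, y))).im < -0.05 := by
  have hm : 0 * (π / 4) - π / 8 = -(π / 8) := by ring
  rw [psi_eq_add_sub, phi_add_sub_im, hm, sin_neg, show 2 * -(π / 8) = -(π / 4) by ring,
    sin_neg, sin_pi_div_four]
  linarith [lt_sqrt_two_div_two_add_two_sin_pi_div_eight_mul_cos hy]

lemma phi_psi_right_im_gt (hy : y ∈ Set.Icc (0 : ℝ) 1) : (phi (psi (1, y))).im > 0.05 := by
  have hm : 1 * (π / 4) - π / 8 = π / 8 := by ring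
  rw [psi_eq_add_sub, phi_add_sub_im, hm, show 2 * (π / 8) = π / 4 by ring, sin_pi_div_four]
  linarith [lt_sqrt_two_div_two_add_two_sin_pi_div_eight_mul_cos hy]

end Sides

/-- Sign estimates for `φ ∘ ψ` on the four sides of the unit square. -/
theorem phi_psi_boundary_estimates :
    ∀ x ∈ Set.Icc (0 : ℝ) 1, ∀ y ∈ Set.Icc (0 : ℝ) 1,
      (phi (psi (x, 0))).re < -0.05 ∧ (phi (psi (x, 1))).re > 0.05 ∧
      (phi (psi (0, y))).im < -0.05 ∧ (phi (psi (1, y))).im > 0.05 :=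
  fun _ hx _ hy =>
    ⟨phi_psi_bottom_re_lt hx, phi_psi_top_re_gt hx, phi_psi_left_im_lt hy, phi_psi_right_im_gt hy⟩
end

section
/- Let ψ : [0,1]² → ℝ² be the affine map ψ(x,y) = (5π/8, −7π/8) + x·(π/4, π/4) + y·(−π/2, π/2). Every continuous function g : ℝ² → ℂ satisfying |g(p) − φ(p)| < 0.025 for all p ∈ ψ([0,1]²) has a zero in ψ([0,1]²), i.e., there exists (x₀,y₀) ∈ [0,1]² with g(ψ(x₀,y₀)) = 0. -/
open Real

/-!
Writing `s = (a + b) / 2` and `t = (a - b) / 2`, one has `3 φ(a, b) = e^{is} (e^{is} + 2 cos t)`.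
Along the bottom, right, top and left edges of the parameter square the factor `e^{is} + 2 cos t`
has real part `≤ -1/4`, imaginary part `≥ 1/4`, real part `≥ 1/4` and imaginary part `≤ -1/4`,
and `3 · 0.025 < 1/4`, so `e^{-is} · 3g ∘ ψ` satisfies the strict sign conditions of the
Poincaré–Miranda theorem. If a map with these boundary signs had no zero on the square, it would
have a continuous argument there (the square is simply connected); on each edge this argument stays
in a single sector of width `π`, and matching the sectors at the four corners shows that it
increases by `2π` around the boundary, which is absurd.
-/

abbrev unitSquare : Set (ℝ × ℝ) := Set.Icc 0 1 ×ˢ Set.Icc 0 1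

theorem exists_continuous_exp_eq {X : Type*} [TopologicalSpace X] [SimplyConnectedSpace X]
    [LocallyPathConnectedSpace X] {f : X → ℂ} (hf : Continuous f) (h0 : ∀ x, f x ≠ 0) :
    ∃ L : X → ℂ, Continuous L ∧ ∀ x, Complex.exp (L x) = f x := by
  obtain ⟨x₀⟩ := (inferInstance : Nonempty X)
  obtain ⟨L, ⟨-, hL⟩, -⟩ := Complex.isCoveringMapOn_exp.existsUnique_continuousMap_lifts
    ⟨f, hf⟩ (Complex.exp_log (h0 x₀)) h0
  exact ⟨L, L.continuous, congrFun hL⟩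

theorem exists_continuous_exp_eq_on_unitSquare {F : ℝ × ℝ → ℂ} (hF : ContinuousOn F unitSquare)
    (h0 : ∀ p ∈ unitSquare, F p ≠ 0) :
    ∃ L : ℝ × ℝ → ℂ, Continuous L ∧ ∀ p ∈ unitSquare, Complex.exp (L p) = F p := by
  let r : ℝ × ℝ → ℝ × ℝ := fun p =>
    (Set.projIcc 0 1 zero_le_one p.1, Set.projIcc 0 1 zero_le_one p.2)
  have hr : Continuous r := by fun_prop
  have hrK : ∀ p, r p ∈ unitSquare := fun p => ⟨Subtype.prop _, Subtype.prop _⟩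
  have hrid : ∀ p ∈ unitSquare, r p = p := fun p hp => by
    simp [r, Set.projIcc_of_mem _ hp.1, Set.projIcc_of_mem _ hp.2]
  obtain ⟨L, hL, hexp⟩ := exists_continuous_exp_eq (hF.comp_continuous hr hrK)
    (fun p => h0 _ (hrK p))
  exact ⟨L, hL, fun p hp => by simpa [hrid p hp] using hexp p⟩

theorem Real.exists_int_abs_sub_lt_of_cos_pos {x : ℝ} (h : 0 < cos x) :
    ∃ k : ℤ, |x - 2 * π * k| < π / 2 := by
  rw [← Angle.cos_coe, Angle.cos_pos_iff_abs_toReal_lt_pi_div_two, Angle.toReal_coe,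
    toIocMod, zsmul_eq_mul] at h
  exact ⟨toIocDiv two_pi_pos (-π) x, by rwa [mul_comm]⟩

theorem IsPreconnected.exists_int_forall_abs_sub_lt_of_cos_pos {X : Type*} [TopologicalSpace X]
    {S : Set X} (hS : IsPreconnected S) {θ : X → ℝ} (hθ : ContinuousOn θ S)
    (hcos : ∀ p ∈ S, 0 < cos (θ p)) : ∃ k : ℤ, ∀ p ∈ S, |θ p - 2 * π * k| < π / 2 := by
  rcases S.eq_empty_or_nonempty with rfl | ⟨p₀, hp₀⟩
  · exact ⟨0, by simp⟩
  obtain ⟨k, hk⟩ := exists_int_abs_sub_lt_of_cos_pos (hcos p₀ hp₀)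
  refine ⟨k, fun p hp => ?_⟩
  by_contra! hle
  suffices ∃ q ∈ S, ∃ m : ℤ, θ q = (2 * m + 1) * π / 2 by
    obtain ⟨q, hq, m, hm⟩ := this
    exact (hcos q hq).ne' (cos_eq_zero_iff.mpr ⟨m, hm⟩)
  rw [abs_lt] at hk
  rcases le_abs'.mp hle with h | h
  · obtain ⟨q, hq, hθq⟩ := hS.intermediate_value hp hp₀ hθ
      (show 2 * π * k - π / 2 ∈ Set.Icc (θ p) (θ p₀) from ⟨by linarith, by linarith⟩)
    exact ⟨q, hq, 2 * k - 1, by rw [hθq]; push_cast; ring⟩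
  · obtain ⟨q, hq, hθq⟩ := hS.intermediate_value hp₀ hp hθ
      (show 2 * π * k + π / 2 ∈ Set.Icc (θ p₀) (θ p) from ⟨by linarith, by linarith⟩)
    exact ⟨q, hq, 2 * k, by rw [hθq]; push_cast; ring⟩

theorem Real.int_eq_of_abs_sub_lt_of_abs_sub_lt {x α β : ℝ} {k l : ℤ} (hαβ : α - β = π / 2)
    (hk : |x - α - 2 * π * k| < π / 2) (hl : |x - β - 2 * π * l| < π / 2) : k = l := by
  rw [abs_lt] at hk hl
  have hkl : (k : ℝ) < l + 1 := by nlinarith [pi_pos]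
  have hlk : (l : ℝ) < k + 1 := by nlinarith [pi_pos]
  have : k < l + 1 := by exact_mod_cast hkl
  have : l < k + 1 := by exact_mod_cast hlk
  omega

theorem exists_zero_of_re_im_sign_on_edges {F : ℝ × ℝ → ℂ} (hF : ContinuousOn F unitSquare)
    (hbot : ∀ x ∈ Set.Icc (0 : ℝ) 1, (F (x, 0)).re < 0)
    (hright : ∀ y ∈ Set.Icc (0 : ℝ) 1, 0 < (F (1, y)).im)
    (htop : ∀ x ∈ Set.Icc (0 : ℝ) 1, 0 < (F (x, 1)).re)
    (hleft : ∀ y ∈ Set.Icc (0 : ℝ) 1, (F (0, y)).im < 0) :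
    ∃ p ∈ unitSquare, F p = 0 := by
  by_contra! h0
  obtain ⟨L, hL, hexp⟩ := exists_continuous_exp_eq_on_unitSquare hF h0
  set θ : ℝ × ℝ → ℝ := fun p => (L p).im
  have hθ : Continuous θ := Complex.continuous_im.comp hL
  have hre : ∀ p ∈ unitSquare, (F p).re = Real.exp (L p).re * cos (θ p) := fun p hp => by
    rw [← hexp p hp, Complex.exp_re]
  have him : ∀ p ∈ unitSquare, (F p).im = Real.exp (L p).re * sin (θ p) := fun p hp => by
    rw [← hexp p hp, Complex.exp_im]
  have h0I : (0 : ℝ) ∈ Set.Icc (0 : ℝ) 1 := by norm_num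
  have h1I : (1 : ℝ) ∈ Set.Icc (0 : ℝ) 1 := by norm_num
  obtain ⟨kB, hkB⟩ := isPreconnected_Icc.exists_int_forall_abs_sub_lt_of_cos_pos
    (θ := fun x => θ (x, 0) - π) (by fun_prop) fun x hx => by
      have := hbot x hx
      rw [hre _ ⟨hx, h0I⟩] at this
      simpa [cos_sub_pi] using neg_of_mul_neg_right this (exp_pos _).le
  obtain ⟨kR, hkR⟩ := isPreconnected_Icc.exists_int_forall_abs_sub_lt_of_cos_pos
    (θ := fun y => θ (1, y) - π / 2) (by fun_prop) fun y hy => by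
      have := hright y hy
      rw [him _ ⟨h1I, hy⟩] at this
      simpa [cos_sub_pi_div_two] using pos_of_mul_pos_right this (exp_pos _).le
  obtain ⟨kT, hkT⟩ := isPreconnected_Icc.exists_int_forall_abs_sub_lt_of_cos_pos
    (θ := fun x => θ (x, 1) - 0) (by fun_prop) fun x hx => by
      have := htop x hx
      rw [hre _ ⟨hx, h1I⟩] at this
      simpa using pos_of_mul_pos_right this (exp_pos _).le
  obtain ⟨kL, hkL⟩ := isPreconnected_Icc.exists_int_forall_abs_sub_lt_of_cos_pos
    (θ := fun y => θ (0, y) - -(π / 2)) (by fun_prop) fun y hy => by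
      have := hleft y hy
      rw [him _ ⟨h0I, hy⟩] at this
      simpa [cos_add_pi_div_two] using neg_of_mul_neg_right this (exp_pos _).le
  have hBR : kB = kR := int_eq_of_abs_sub_lt_of_abs_sub_lt (by ring) (hkB 1 h1I) (hkR 0 h0I)
  have hRT : kR = kT := int_eq_of_abs_sub_lt_of_abs_sub_lt (by ring) (hkR 1 h1I) (hkT 1 h1I)
  have hTL : kT = kL := int_eq_of_abs_sub_lt_of_abs_sub_lt (by ring) (hkT 0 h0I) (hkL 1 h1I)
  -- going once around the boundary, the argument has turned by `2π`
  have hLB : kL = kB + 1 := int_eq_of_abs_sub_lt_of_abs_sub_lt (β := -π) (by ring) (hkL 0 h0I)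
    (by convert hkB 0 h0I using 2; push_cast; ring)
  omega

theorem exists_zero_of_norm_sub_lt_of_re_im_bounds_on_edges {F H : ℝ × ℝ → ℂ} {ε : ℝ}
    (hF : ContinuousOn F unitSquare) (hFH : ∀ p ∈ unitSquare, ‖F p - H p‖ < ε)
    (hbot : ∀ x, (H (x, 0)).re ≤ -ε) (hright : ∀ y, ε ≤ (H (1, y)).im)
    (htop : ∀ x, ε ≤ (H (x, 1)).re) (hleft : ∀ y, (H (0, y)).im ≤ -ε) :
    ∃ p ∈ unitSquare, F p = 0 := by
  have hre p (hp : p ∈ unitSquare) := abs_lt.mp ((Complex.abs_re_le_norm _).trans_lt (hFH p hp))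
  have him p (hp : p ∈ unitSquare) := abs_lt.mp ((Complex.abs_im_le_norm _).trans_lt (hFH p hp))
  simp only [Complex.sub_re, Complex.sub_im] at hre him
  have h0I : (0 : ℝ) ∈ Set.Icc (0 : ℝ) 1 := by norm_num
  have h1I : (1 : ℝ) ∈ Set.Icc (0 : ℝ) 1 := by norm_num
  refine exists_zero_of_re_im_sign_on_edges hF (fun x hx => ?_) (fun y hy => ?_)
    (fun x hx => ?_) (fun y hy => ?_)
  · linarith [hre (x, 0) ⟨hx, h0I⟩, hbot x]
  · linarith [him (1, y) ⟨h1I, hy⟩, hright y]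
  · linarith [hre (x, 1) ⟨hx, h1I⟩, htop x]
  · linarith [him (0, y) ⟨h0I, hy⟩, hleft y]

noncomputable def phiReduced (q : ℝ × ℝ) : ℂ :=
  Complex.exp (↑((q.1 + q.2) / 2) * Complex.I) + 2 * Real.cos ((q.1 - q.2) / 2)

open Complex in
theorem three_mul_phi (q : ℝ × ℝ) :
    3 * phi q = exp (↑((q.1 + q.2) / 2) * I) * phiReduced q := by
  obtain ⟨a, b⟩ := q
  have hcos : (2 : ℂ) * Real.cos ((a - b) / 2) =
      exp (↑((a - b) / 2) * I) + exp (-(↑((a - b) / 2) * I)) := by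
    rw [ofReal_cos, Complex.cos, neg_mul]; ring
  have ha : I * a = ↑((a + b) / 2) * I + ↑((a - b) / 2) * I := by push_cast; ring
  have hb : I * b = ↑((a + b) / 2) * I + -(↑((a - b) / 2) * I) := by push_cast; ring
  have hab : I * (↑a + ↑b) = ↑((a + b) / 2) * I + ↑((a + b) / 2) * I := by push_cast; ring
  simp only [phi, phiReduced, hcos, ha, hb, hab, Complex.exp_add]
  ring

open Complex in
theorem norm_exp_neg_mul_sub_phiReduced (c : ℂ) (q : ℝ × ℝ) :
    ‖exp (-(↑((q.1 + q.2) / 2) * I)) * (3 * c) - phiReduced q‖ = 3 * ‖c - phi q‖ := by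
  have hunit : exp (-(↑((q.1 + q.2) / 2) * I)) * exp (↑((q.1 + q.2) / 2) * I) = 1 := by
    rw [← Complex.exp_add]; simp
  have : exp (-(↑((q.1 + q.2) / 2) * I)) * (3 * c) - phiReduced q =
      exp (↑(-((q.1 + q.2) / 2)) * I) * (3 * (c - phi q)) := by
    rw [mul_sub (3 : ℂ), three_mul_phi, ofReal_neg, neg_mul]
    linear_combination (phiReduced q) * hunit
  rw [this, norm_mul, norm_exp_ofReal_mul_I, norm_mul, one_mul, Complex.norm_ofNat]

theorem re_phiReduced (q : ℝ × ℝ) :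
    (phiReduced q).re = cos ((q.1 + q.2) / 2) + 2 * cos ((q.1 - q.2) / 2) := by
  simp only [phiReduced, Complex.add_re, Complex.exp_ofReal_mul_I_re, Complex.mul_re,
    Complex.ofReal_re, Complex.ofReal_im, Complex.re_ofNat, Complex.im_ofNat]
  ring

theorem im_phiReduced (q : ℝ × ℝ) : (phiReduced q).im = sin ((q.1 + q.2) / 2) := by
  simp only [phiReduced, Complex.add_im, Complex.exp_ofReal_mul_I_im, Complex.mul_im,
    Complex.ofReal_re, Complex.ofReal_im, Complex.re_ofNat, Complex.im_ofNat]
  ring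

theorem psi_half_add (x y : ℝ) :
    ((psi (x, y)).1 + (psi (x, y)).2) / 2 = π * (2 * x - 1) / 8 := by
  simp only [psi]; ring

theorem psi_half_sub (x y : ℝ) :
    ((psi (x, y)).1 - (psi (x, y)).2) / 2 = 3 * π / 4 - y * (π / 2) := by
  simp only [psi]; ring

theorem five_fourths_lt_sqrt_two : 5 / 4 < √2 := by
  rw [lt_sqrt (by norm_num)]; norm_num

theorem one_fourth_le_sin_pi_div_eight : 1 / 4 ≤ sin (π / 8) := by
  have := mul_le_sin (x := π / 8) (by positivity) (by linarith [pi_pos])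
  rwa [show 2 / π * (π / 8) = 1 / 4 by field_simp; ring] at this

theorem re_phiReduced_psi_bottom (x : ℝ) : (phiReduced (psi (x, 0))).re ≤ -(1 / 4) := by
  rw [re_phiReduced, psi_half_sub, show 3 * π / 4 - 0 * (π / 2) = π - π / 4 by ring,
    cos_pi_sub, cos_pi_div_four]
  linarith [cos_le_one (((psi (x, 0)).1 + (psi (x, 0)).2) / 2), five_fourths_lt_sqrt_two]

theorem re_phiReduced_psi_top (x : ℝ) : 1 / 4 ≤ (phiReduced (psi (x, 1))).re := by
  rw [re_phiReduced, psi_half_sub, show 3 * π / 4 - 1 * (π / 2) = π / 4 by ring, cos_pi_div_four]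
  linarith [neg_one_le_cos (((psi (x, 1)).1 + (psi (x, 1)).2) / 2), five_fourths_lt_sqrt_two]

theorem im_phiReduced_psi_right (y : ℝ) : 1 / 4 ≤ (phiReduced (psi (1, y))).im := by
  rw [im_phiReduced, psi_half_add, show π * (2 * 1 - 1) / 8 = π / 8 by ring]
  exact one_fourth_le_sin_pi_div_eight

theorem im_phiReduced_psi_left (y : ℝ) : (phiReduced (psi (0, y))).im ≤ -(1 / 4) := by
  rw [im_phiReduced, psi_half_add, show π * (2 * 0 - 1) / 8 = -(π / 8) by ring, sin_neg]
  linarith [one_fourth_le_sin_pi_div_eight]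

/-- Every continuous `g` with `|g − φ| < 0.025` on `ψ([0,1]²)` has a zero in `ψ([0,1]²)`. -/
theorem exists_zero_in_psi_square (g : ℝ × ℝ → ℂ) (hg : Continuous g)
    (happrox : ∀ p ∈ psi '' (Set.Icc (0 : ℝ) 1 ×ˢ Set.Icc (0 : ℝ) 1),
      ‖g p - phi p‖ < 0.025) :
    ∃ x₀ y₀ : ℝ, (x₀, y₀) ∈ Set.Icc (0 : ℝ) 1 ×ˢ Set.Icc (0 : ℝ) 1 ∧
      g (psi (x₀, y₀)) = 0 := by
  have hψ : Continuous psi := by unfold psi; fun_prop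
  obtain ⟨⟨x, y⟩, hp, hzero⟩ := exists_zero_of_norm_sub_lt_of_re_im_bounds_on_edges (ε := 1 / 4)
    (F := fun p => Complex.exp (-(↑(((psi p).1 + (psi p).2) / 2) * Complex.I)) * (3 * g (psi p)))
    (H := fun p => phiReduced (psi p)) (by fun_prop)
    (fun p hp => by
      rw [norm_exp_neg_mul_sub_phiReduced]
      linarith [happrox _ (Set.mem_image_of_mem psi hp)])
    re_phiReduced_psi_bottom im_phiReduced_psi_right re_phiReduced_psi_top im_phiReduced_psi_left
  exact ⟨x, y, hp, by simpa [Complex.exp_ne_zero] using hzero⟩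
end
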